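/- In the fixed run setting, suppose i ≤ n, t ∉ σ(𝒟) ∪ 𝒱_q, and σ(T_i) ⊢dy t via a normal proof ending in a destructor rule. Then there is an ℓ < i such that σ(T_ℓ) ⊢dy t. -/

import Mathlib

open scoped Classical

/-! ## Terms -/

inductive Term : Type
  | name : ℕ → Term
  | var  : ℕ → Term
  | pair : Term → Term → Term
  | enc  : Term → Term → Term
deriving DecidableEq

namespace Term

def subterms : Term → Set Term
  | name n => {name n}
  | var x => {var x}
  | pair a b => insert (pair a b) (subterms a ∪ subterms b)
  | enc a b => insert (enc a b) (subterms a ∪ subterms b)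

def tvars : Term → Set ℕ
  | name _ => ∅
  | var x => {x}
  | pair a b => tvars a ∪ tvars b
  | enc a b => tvars a ∪ tvars b

/-- A term is ground if it contains no variables. -/
def ground (t : Term) : Prop := tvars t = ∅

end Term

def sSubterms (X : Set Term) : Set Term := ⋃ t ∈ X, t.subterms
def sVars (X : Set Term) : Set ℕ := ⋃ t ∈ X, t.tvars
def varTerms (V : Set ℕ) : Set Term := Term.var '' V
def pairSubterms (E : Set (Term × Term)) : Set Term :=
  ⋃ e ∈ E, (Term.subterms e.1 ∪ Term.subterms e.2)

/-! ## Substitutions -/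

abbrev Subst := ℕ → Term

namespace Subst

def app (σ : Subst) : Term → Term
  | Term.name n => Term.name n
  | Term.var x => σ x
  | Term.pair a b => Term.pair (app σ a) (app σ b)
  | Term.enc a b => Term.enc (app σ a) (app σ b)

def dom (σ : Subst) : Set ℕ := {x | σ x ≠ Term.var x}

/-- A (totally) ground substitution. -/
def isGround (σ : Subst) : Prop := ∀ x, (σ x).ground

end Subst

def pairImg (σ : Subst) (E : Set (Term × Term)) : Set (Term × Term) :=
  (fun e => (σ.app e.1, σ.app e.2)) '' E

/-! ## Dolev-Yao derivability.  `inv` gives the inverse of a key. -/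

inductive dy (inv : Term → Term) (X : Set Term) : Term → Prop
  | ax {t} : t ∈ X → dy inv X t
  | pair {t u} : dy inv X t → dy inv X u → dy inv X (Term.pair t u)
  | enc {t k} : dy inv X t → dy inv X k → dy inv X (Term.enc t k)
  | fst {t u} : dy inv X (Term.pair t u) → dy inv X t
  | snd {t u} : dy inv X (Term.pair t u) → dy inv X u
  | dec {t k} : dy inv X (Term.enc t k) → dy inv X (inv k) → dy inv X t

/-! ## Positions -/

def positions : Term → Set (List Bool)
  | Term.pair a b =>
      insert [] ((List.cons false) '' positions a ∪ (List.cons true) '' positions b)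
  | Term.enc a b =>
      insert [] ((List.cons false) '' positions a ∪ (List.cons true) '' positions b)
  | _ => {[]}

def subtermAt : Term → List Bool → Option Term
  | t, [] => some t
  | Term.pair a b, i :: p => subtermAt (if i then b else a) p
  | Term.enc a b, i :: p => subtermAt (if i then b else a) p
  | _, _ :: _ => none

/-- Positions of `t` at which the variable `x` occurs. -/
def posof (x : ℕ) (t : Term) : Set (List Bool) := {p | subtermAt t p = some (Term.var x)}

/-- Replace the subterms at every position in `P` by `r`. -/
noncomputable def replaceAt : Term → Set (List Bool) → Term → Term
  | Term.pair a b, P, r =>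
      if [] ∈ P then r
      else Term.pair (replaceAt a {p | false :: p ∈ P} r) (replaceAt b {p | true :: p ∈ P} r)
  | Term.enc a b, P, r =>
      if [] ∈ P then r
      else Term.enc (replaceAt a {p | false :: p ∈ P} r) (replaceAt b {p | true :: p ∈ P} r)
  | t, P, r => if [] ∈ P then r else t

/-- `Qpos t p`: the root position together with all positions `q ++ [i]` of `t`
where `q` is a proper prefix of `p`. -/
def Qpos (t : Term) (p : List Bool) : Set (List Bool) :=
  insert [] {q | q ∈ positions t ∧ ∃ q' i, q = q' ++ [i] ∧ q' <+: p ∧ q' ≠ p}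

/-- Abstractable positions of `t` with respect to `S`. -/
def absPos (inv : Term → Term) (S : Set Term) (t : Term) : Set (List Bool) :=
  {p | p ∈ positions t ∧ ∀ q ∈ Qpos t p, ∀ s, subtermAt t q = some s → dy inv S s}

/-! ## Assertions: `∃ bv. (l ⋈ r)` -/

structure Assertion : Type where
  bv : List ℕ
  l : Term
  r : Term
deriving DecidableEq

namespace Assertion

def bvSet (α : Assertion) : Set ℕ := {x | x ∈ α.bv}
def fv (α : Assertion) : Set ℕ := (α.l.tvars ∪ α.r.tvars) \ α.bvSet
def vars (α : Assertion) : Set ℕ := α.l.tvars ∪ α.r.tvars ∪ α.bvSet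
def subterms (α : Assertion) : Set Term := α.l.subterms ∪ α.r.subterms

end Assertion

def afvSet (A : Set Assertion) : Set ℕ := ⋃ β ∈ A, β.fv
def abvSet (A : Set Assertion) : Set ℕ := ⋃ β ∈ A, β.bvSet
def aVarsSet (A : Set Assertion) : Set ℕ := ⋃ β ∈ A, β.vars
def aSubtermsSet (A : Set Assertion) : Set Term := ⋃ β ∈ A, β.subterms

/-- The public terms of an assertion: maximal subterms containing no quantifiable
variable (`Vq` is the set of quantifiable variables). -/
def pubs (Vq : Set ℕ) (α : Assertion) : Set Term :=
  {t | t ∈ α.subterms ∧ t.tvars ∩ Vq = ∅ ∧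
    ¬ ∃ u ∈ α.subterms, t ≠ u ∧ t ∈ u.subterms ∧ u.tvars ∩ Vq = ∅}

/-- prepend an existential quantifier -/
def exA (x : ℕ) (α : Assertion) : Assertion := ⟨x :: α.bv, α.l, α.r⟩

/-- The `0^k` prefix of term positions of an assertion. -/
def prefixL (α : Assertion) : List Bool := List.replicate α.bv.length false

/-- Positions of an assertion at which the variable `x` occurs. -/
def aPosOf (x : ℕ) (α : Assertion) : Set (List Bool) :=
  (fun p => prefixL α ++ false :: p) '' posof x α.l ∪
  (fun p => prefixL α ++ true :: p) '' posof x α.r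

/-- Replace the subterms at every (assertion) position in `P` by `r`. -/
noncomputable def aReplace (α : Assertion) (P : Set (List Bool)) (r : Term) : Assertion :=
  ⟨α.bv,
   replaceAt α.l {p | (prefixL α ++ false :: p) ∈ P} r,
   replaceAt α.r {p | (prefixL α ++ true :: p) ∈ P} r⟩

/-- Abstractable positions of an assertion with respect to `S`. -/
def aAbs (inv : Term → Term) (S : Set Term) (α : Assertion) : Set (List Bool) :=
  (fun p => prefixL α ++ false :: p) '' absPos inv (S ∪ varTerms α.bvSet) α.l ∪
  (fun p => prefixL α ++ true :: p) '' absPos inv (S ∪ varTerms α.bvSet) α.r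

/-! ## The assertion derivation system ⊢a -/

inductive adrv (inv : Term → Term) : Set Term → Set Assertion → Assertion → Prop
  | ax {S A α} : α ∈ A → adrv inv S A α
  | eq {S A t} : dy inv S t → adrv inv S A ⟨[], t, t⟩
  | sym {S A t u} : adrv inv S A ⟨[], t, u⟩ → adrv inv S A ⟨[], u, t⟩
  | trans {S A t u v} : adrv inv S A ⟨[], t, u⟩ → adrv inv S A ⟨[], u, v⟩ →
      adrv inv S A ⟨[], t, v⟩
  | consPair {S A t0 t1 u0 u1} : adrv inv S A ⟨[], t0, u0⟩ → adrv inv S A ⟨[], t1, u1⟩ →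
      adrv inv S A ⟨[], Term.pair t0 t1, Term.pair u0 u1⟩
  | consEnc {S A t0 t1 u0 u1} : adrv inv S A ⟨[], t0, u0⟩ → adrv inv S A ⟨[], t1, u1⟩ →
      adrv inv S A ⟨[], Term.enc t0 t1, Term.enc u0 u1⟩
  | projPairFst {S A t0 t1 u0 u1} :
      adrv inv S A ⟨[], Term.pair t0 t1, Term.pair u0 u1⟩ →
      dy inv S t0 → dy inv S t1 → dy inv S u0 → dy inv S u1 → adrv inv S A ⟨[], t0, u0⟩
  | projPairSnd {S A t0 t1 u0 u1} :
      adrv inv S A ⟨[], Term.pair t0 t1, Term.pair u0 u1⟩ →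
      dy inv S t0 → dy inv S t1 → dy inv S u0 → dy inv S u1 → adrv inv S A ⟨[], t1, u1⟩
  | projEncFst {S A t0 t1 u0 u1} :
      adrv inv S A ⟨[], Term.enc t0 t1, Term.enc u0 u1⟩ →
      dy inv S t0 → dy inv S t1 → dy inv S u0 → dy inv S u1 → adrv inv S A ⟨[], t0, u0⟩
  | projEncSnd {S A t0 t1 u0 u1} :
      adrv inv S A ⟨[], Term.enc t0 t1, Term.enc u0 u1⟩ →
      dy inv S t0 → dy inv S t1 → dy inv S u0 → dy inv S u1 → adrv inv S A ⟨[], t1, u1⟩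
  | exI {S A α x t} : adrv inv S A (aReplace α (aPosOf x α) t) → dy inv S t →
      aPosOf x α ⊆ aAbs inv (insert (Term.var x) S) α → adrv inv S A (exA x α)
  | exE {S A α x γ} : adrv inv S A (exA x α) →
      adrv inv (insert (Term.var x) S) (insert α A) γ →
      x ∉ sVars S → x ∉ afvSet A → x ∉ γ.fv → adrv inv S A γ

/-- ⊢a without the ∃-elimination rule. -/
inductive adrvNX (inv : Term → Term) : Set Term → Set Assertion → Assertion → Prop
  | ax {S A α} : α ∈ A → adrvNX inv S A α
  | eq {S A t} : dy inv S t → adrvNX inv S A ⟨[], t, t⟩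
  | sym {S A t u} : adrvNX inv S A ⟨[], t, u⟩ → adrvNX inv S A ⟨[], u, t⟩
  | trans {S A t u v} : adrvNX inv S A ⟨[], t, u⟩ → adrvNX inv S A ⟨[], u, v⟩ →
      adrvNX inv S A ⟨[], t, v⟩
  | consPair {S A t0 t1 u0 u1} : adrvNX inv S A ⟨[], t0, u0⟩ → adrvNX inv S A ⟨[], t1, u1⟩ →
      adrvNX inv S A ⟨[], Term.pair t0 t1, Term.pair u0 u1⟩
  | consEnc {S A t0 t1 u0 u1} : adrvNX inv S A ⟨[], t0, u0⟩ → adrvNX inv S A ⟨[], t1, u1⟩ →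
      adrvNX inv S A ⟨[], Term.enc t0 t1, Term.enc u0 u1⟩
  | projPairFst {S A t0 t1 u0 u1} :
      adrvNX inv S A ⟨[], Term.pair t0 t1, Term.pair u0 u1⟩ →
      dy inv S t0 → dy inv S t1 → dy inv S u0 → dy inv S u1 → adrvNX inv S A ⟨[], t0, u0⟩
  | projPairSnd {S A t0 t1 u0 u1} :
      adrvNX inv S A ⟨[], Term.pair t0 t1, Term.pair u0 u1⟩ →
      dy inv S t0 → dy inv S t1 → dy inv S u0 → dy inv S u1 → adrvNX inv S A ⟨[], t1, u1⟩
  | projEncFst {S A t0 t1 u0 u1} :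
      adrvNX inv S A ⟨[], Term.enc t0 t1, Term.enc u0 u1⟩ →
      dy inv S t0 → dy inv S t1 → dy inv S u0 → dy inv S u1 → adrvNX inv S A ⟨[], t0, u0⟩
  | projEncSnd {S A t0 t1 u0 u1} :
      adrvNX inv S A ⟨[], Term.enc t0 t1, Term.enc u0 u1⟩ →
      dy inv S t0 → dy inv S t1 → dy inv S u0 → dy inv S u1 → adrvNX inv S A ⟨[], t1, u1⟩
  | exI {S A α x t} : adrvNX inv S A (aReplace α (aPosOf x α) t) → dy inv S t →
      aPosOf x α ⊆ aAbs inv (insert (Term.var x) S) α → adrvNX inv S A (exA x α)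

/-- The equality fragment ⊢eq : derivability of equalities `t ⋈ u` from a set `T` of
terms and a set `E` of equalities, without the quantifier rules. -/
inductive eqdrv (inv : Term → Term) (T : Set Term) (E : Set (Term × Term)) :
    Term → Term → Prop
  | ax {t u} : (t, u) ∈ E → eqdrv inv T E t u
  | eq {t} : dy inv T t → eqdrv inv T E t t
  | sym {t u} : eqdrv inv T E t u → eqdrv inv T E u t
  | trans {t u v} : eqdrv inv T E t u → eqdrv inv T E u v → eqdrv inv T E t v
  | consPair {t0 t1 u0 u1} : eqdrv inv T E t0 u0 → eqdrv inv T E t1 u1 →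
      eqdrv inv T E (Term.pair t0 t1) (Term.pair u0 u1)
  | consEnc {t0 t1 u0 u1} : eqdrv inv T E t0 u0 → eqdrv inv T E t1 u1 →
      eqdrv inv T E (Term.enc t0 t1) (Term.enc u0 u1)
  | projPairFst {t0 t1 u0 u1} : eqdrv inv T E (Term.pair t0 t1) (Term.pair u0 u1) →
      dy inv T t0 → dy inv T t1 → dy inv T u0 → dy inv T u1 → eqdrv inv T E t0 u0
  | projPairSnd {t0 t1 u0 u1} : eqdrv inv T E (Term.pair t0 t1) (Term.pair u0 u1) →
      dy inv T t0 → dy inv T t1 → dy inv T u0 → dy inv T u1 → eqdrv inv T E t1 u1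
  | projEncFst {t0 t1 u0 u1} : eqdrv inv T E (Term.enc t0 t1) (Term.enc u0 u1) →
      dy inv T t0 → dy inv T t1 → dy inv T u0 → dy inv T u1 → eqdrv inv T E t0 u0
  | projEncSnd {t0 t1 u0 u1} : eqdrv inv T E (Term.enc t0 t1) (Term.enc u0 u1) →
      dy inv T t0 → dy inv T t1 → dy inv T u0 → dy inv T u1 → eqdrv inv T E t1 u1

/-! ## Sanitized pairs, kernels, purity, consistency -/

/-- `(S;A)` is sanitized: free variables avoid `Vq`, bound variables are from `Vq`,
and the public terms of each assertion of `A` belong to `S`. -/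
def sanitized (Vq : Set ℕ) (S : Set Term) (A : Set Assertion) : Prop :=
  ((sVars S ∪ afvSet A) ∩ Vq = ∅) ∧ (∀ β ∈ A, β.bvSet ⊆ Vq) ∧ (∀ β ∈ A, pubs Vq β ⊆ S)

def kerT (S : Set Term) (A : Set Assertion) : Set Term := S ∪ varTerms (abvSet A)
def kerE (A : Set Assertion) : Set (Term × Term) := {e | ∃ β ∈ A, e = (β.l, β.r)}
def kerA (A : Set Assertion) : Set Assertion := {γ | ∃ β ∈ A, γ = Assertion.mk [] β.l β.r}

/-- The set of assertions corresponding to a set of equalities. -/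
def EtoA (E : Set (Term × Term)) : Set Assertion := {γ | ∃ e ∈ E, γ = Assertion.mk [] e.1 e.2}

/-- `(T;E)` is pure if it is the kernel of some sanitized pair. -/
def isPure (Vq : Set ℕ) (T : Set Term) (E : Set (Term × Term)) : Prop :=
  ∃ S A, sanitized Vq S A ∧ T = kerT S A ∧ E = kerE A

/-- `(T;E)` is consistent if some ground substitution unifies every equality in `E`. -/
def consistentE (E : Set (Term × Term)) : Prop :=
  ∃ lam : Subst, lam.isGround ∧ ∀ e ∈ E, lam.app e.1 = lam.app e.2

/-- `M`-bounded substitution: every image has at most `M` distinct subterms. -/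
def boundedSub (M : ℕ) (μ : Subst) : Prop :=
  ∀ x ∈ μ.dom, (Term.subterms (μ x)).ncard ≤ M



/-! ## Dolev-Yao proof trees -/

inductive DPT : Type
  | ax (t : Term)
  | pair (p q : DPT)
  | enc (p q : DPT)
  | fst (p : DPT)
  | snd (p : DPT)
  | dec (p q : DPT)

namespace DPT

/-- The conclusion of a DY proof tree, if it is well-formed. -/
def concl (inv : Term → Term) : DPT → Option Term
  | ax t => some t
  | pair p q =>
      match concl inv p, concl inv q with
      | some a, some b => some (Term.pair a b)
      | _, _ => none
  | enc p q =>
      match concl inv p, concl inv q with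
      | some a, some b => some (Term.enc a b)
      | _, _ => none
  | fst p =>
      match concl inv p with
      | some (Term.pair a _) => some a
      | _ => none
  | snd p =>
      match concl inv p with
      | some (Term.pair _ b) => some b
      | _ => none
  | dec p q =>
      match concl inv p, concl inv q with
      | some (Term.enc a k), some k' => if k' = inv k then some a else none
      | _, _ => none

/-- Validity of a DY proof tree from the set `X`. -/
def valid (inv : Term → Term) (X : Set Term) : DPT → Prop
  | ax t => t ∈ X
  | pair p q => valid inv X p ∧ valid inv X q
  | enc p q => valid inv X p ∧ valid inv X q
  | fst p => valid inv X p ∧ ∃ a b, concl inv p = some (Term.pair a b)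
  | snd p => valid inv X p ∧ ∃ a b, concl inv p = some (Term.pair a b)
  | dec p q => valid inv X p ∧ valid inv X q ∧
      ∃ a k, concl inv p = some (Term.enc a k) ∧ concl inv q = some (inv k)

def endsConstructor : DPT → Prop
  | pair _ _ => True
  | enc _ _ => True
  | _ => False

def endsDestructor : DPT → Prop
  | fst _ => True
  | snd _ => True
  | dec _ _ => True
  | _ => False

/-- Normal DY proofs: no constructor conclusion is the major premise of a destructor. -/
def normal : DPT → Prop
  | ax _ => True
  | pair p q => normal p ∧ normal q
  | enc p q => normal p ∧ normal q
  | fst p => normal p ∧ ¬ endsConstructor p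
  | snd p => normal p ∧ ¬ endsConstructor p
  | dec p q => normal p ∧ normal q ∧ ¬ endsConstructor p

/-- All terms occurring in a DY proof tree (conclusions of subproofs). -/
def termSet (inv : Term → Term) : DPT → Set Term
  | ax t => {t}
  | pair p q => {a | concl inv (pair p q) = some a} ∪ termSet inv p ∪ termSet inv q
  | enc p q => {a | concl inv (enc p q) = some a} ∪ termSet inv p ∪ termSet inv q
  | fst p => {a | concl inv (fst p) = some a} ∪ termSet inv p
  | snd p => {a | concl inv (snd p) = some a} ∪ termSet inv p
  | dec p q => {a | concl inv (dec p q) = some a} ∪ termSet inv p ∪ termSet inv q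

/-- Typed DY proof w.r.t. a set `G`: every subproof ends in a constructor rule or
has its conclusion in `G`. -/
def typed (inv : Term → Term) (G : Set Term) : DPT → Prop
  | ax t => t ∈ G
  | pair p q => typed inv G p ∧ typed inv G q
  | enc p q => typed inv G p ∧ typed inv G q
  | fst p => typed inv G p ∧ ∀ a, concl inv (fst p) = some a → a ∈ G
  | snd p => typed inv G p ∧ ∀ a, concl inv (snd p) = some a → a ∈ G
  | dec p q => typed inv G p ∧ typed inv G q ∧ ∀ a, concl inv (dec p q) = some a → a ∈ G

end DPT

/-! ## Equality proof trees (the system ⊢eq), with n-ary trans -/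

inductive EPT : Type
  | ax (t u : Term)
  | eq (t : Term) (d : DPT)
  | sym (t u : Term) (p : EPT)
  | trans (t u : Term) (ps : List EPT)
  | consPair (t0 u0 t1 u1 : Term) (p q : EPT)
  | consEnc (t0 u0 t1 u1 : Term) (p q : EPT)
  | projPairFst (t0 t1 u0 u1 : Term) (p : EPT)
  | projPairSnd (t0 t1 u0 u1 : Term) (p : EPT)
  | projEncFst (t0 t1 u0 u1 : Term) (p : EPT)
  | projEncSnd (t0 t1 u0 u1 : Term) (p : EPT)

namespace EPT

/-- The conclusion `t ⋈ u` of an equality proof tree. -/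
def concl : EPT → Term × Term
  | ax t u => (t, u)
  | eq t _ => (t, t)
  | sym t u _ => (t, u)
  | trans t u _ => (t, u)
  | consPair t0 u0 t1 u1 _ _ => (Term.pair t0 t1, Term.pair u0 u1)
  | consEnc t0 u0 t1 u1 _ _ => (Term.enc t0 t1, Term.enc u0 u1)
  | projPairFst t0 _ u0 _ _ => (t0, u0)
  | projPairSnd _ t1 _ u1 _ => (t1, u1)
  | projEncFst t0 _ u0 _ _ => (t0, u0)
  | projEncSnd _ t1 _ u1 _ => (t1, u1)

/-- Immediate subproof relation. -/
inductive Sub : EPT → EPT → Prop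
  | sym {t u p} : Sub p (EPT.sym t u p)
  | trans {t u ps p} : p ∈ ps → Sub p (EPT.trans t u ps)
  | consPairL {t0 u0 t1 u1 p q} : Sub p (EPT.consPair t0 u0 t1 u1 p q)
  | consPairR {t0 u0 t1 u1 p q} : Sub q (EPT.consPair t0 u0 t1 u1 p q)
  | consEncL {t0 u0 t1 u1 p q} : Sub p (EPT.consEnc t0 u0 t1 u1 p q)
  | consEncR {t0 u0 t1 u1 p q} : Sub q (EPT.consEnc t0 u0 t1 u1 p q)
  | projPairFst {t0 t1 u0 u1 p} : Sub p (EPT.projPairFst t0 t1 u0 u1 p)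
  | projPairSnd {t0 t1 u0 u1 p} : Sub p (EPT.projPairSnd t0 t1 u0 u1 p)
  | projEncFst {t0 t1 u0 u1 p} : Sub p (EPT.projEncFst t0 t1 u0 u1 p)
  | projEncSnd {t0 t1 u0 u1 p} : Sub p (EPT.projEncSnd t0 t1 u0 u1 p)

/-- `Subproof p q`: `p` is a (not necessarily proper) subproof of `q`. -/
def Subproof : EPT → EPT → Prop := Relation.ReflTransGen Sub

def isAx : EPT → Prop
  | ax _ _ => True
  | _ => False

def isTrans : EPT → Prop
  | trans _ _ _ => True
  | _ => False

def isCons : EPT → Prop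
  | consPair _ _ _ _ _ _ => True
  | consEnc _ _ _ _ _ _ => True
  | _ => False

def isProj : EPT → Prop
  | projPairFst _ _ _ _ _ => True
  | projPairSnd _ _ _ _ _ => True
  | projEncFst _ _ _ _ _ => True
  | projEncSnd _ _ _ _ _ => True
  | _ => False

/-- The ⊢eq proof contains an occurrence of the cons rule. -/
def containsCons (π : EPT) : Prop := ∃ π', Subproof π' π ∧ isCons π'

/-- Local validity of the last rule of an equality proof tree. -/
def localValid (inv : Term → Term) (T : Set Term) (E : Set (Term × Term)) : EPT → Prop
  | ax t u => (t, u) ∈ E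
  | eq t d => DPT.valid inv T d ∧ DPT.concl inv d = some t
  | sym t u p => concl p = (u, t)
  | trans t u ps =>
      ps ≠ [] ∧ (ps.head?.map fun p => (concl p).1) = some t ∧
      (ps.getLast?.map fun p => (concl p).2) = some u ∧
      List.Chain' (fun p q => (concl p).2 = (concl q).1) ps
  | consPair t0 u0 t1 u1 p q => concl p = (t0, u0) ∧ concl q = (t1, u1)
  | consEnc t0 u0 t1 u1 p q => concl p = (t0, u0) ∧ concl q = (t1, u1)
  | projPairFst t0 t1 u0 u1 p => concl p = (Term.pair t0 t1, Term.pair u0 u1) ∧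
      dy inv T t0 ∧ dy inv T t1 ∧ dy inv T u0 ∧ dy inv T u1
  | projPairSnd t0 t1 u0 u1 p => concl p = (Term.pair t0 t1, Term.pair u0 u1) ∧
      dy inv T t0 ∧ dy inv T t1 ∧ dy inv T u0 ∧ dy inv T u1
  | projEncFst t0 t1 u0 u1 p => concl p = (Term.enc t0 t1, Term.enc u0 u1) ∧
      dy inv T t0 ∧ dy inv T t1 ∧ dy inv T u0 ∧ dy inv T u1
  | projEncSnd t0 t1 u0 u1 p => concl p = (Term.enc t0 t1, Term.enc u0 u1) ∧
      dy inv T t0 ∧ dy inv T t1 ∧ dy inv T u0 ∧ dy inv T u1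

/-- Validity of an equality proof tree from `(T;E)`. -/
def valid (inv : Term → Term) (T : Set Term) (E : Set (Term × Term)) (π : EPT) : Prop :=
  ∀ π', Subproof π' π → localValid inv T E π'

/-- Local normality conditions for the last rule. -/
def localNormal : EPT → Prop
  | ax _ _ => True
  | eq _ d => DPT.normal d ∧ DPT.endsDestructor d
  | sym _ _ p => isAx p
  | trans _ _ ps =>
      (∀ p ∈ ps, ¬ isTrans p ∧ (concl p).1 ≠ (concl p).2) ∧
      List.Chain' (fun p q => ¬ (isCons p ∧ isCons q)) ps
  | consPair _ _ _ _ _ _ => True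
  | consEnc _ _ _ _ _ _ => True
  | projPairFst _ _ _ _ p => ¬ containsCons p
  | projPairSnd _ _ _ _ p => ¬ containsCons p
  | projEncFst _ _ _ _ p => ¬ containsCons p
  | projEncSnd _ _ _ _ p => ¬ containsCons p

/-- A normal ⊢eq proof. -/
def normalP (π : EPT) : Prop := ∀ π', Subproof π' π → localNormal π'

/-- The DY subproof attached to an `eq` node, if any. -/
def dSub : EPT → Option DPT
  | eq _ d => some d
  | _ => none

/-- All terms occurring in an ⊢eq proof: the terms of the conclusions of all
subproofs, including the DY subproofs. -/
def termSet (inv : Term → Term) (π : EPT) : Set Term :=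
  {a | ∃ π', Subproof π' π ∧
    (a = (concl π').1 ∨ a = (concl π').2 ∨
      ∃ d, dSub π' = some d ∧ a ∈ DPT.termSet inv d)}

/-- Typed ⊢eq proof w.r.t. a set `Typ` of typed terms: every subproof contains
cons, or proves a trivial equality, or has typed conclusion terms. -/
def typedP (Typ : Set Term) (π : EPT) : Prop :=
  ∀ π', Subproof π' π →
    containsCons π' ∨ (concl π').1 = (concl π').2 ∨
      ((concl π').1 ∈ Typ ∧ (concl π').2 ∈ Typ)

end EPT



/-! ## The fixed run setting -/

/-- A fixed run of a protocol: at step `i` (for `1 ≤ i ≤ n`) the honest agent `uᵢ`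
receives the assertion `β i` from the intruder and sends the assertion `α i`;
`(T i; E i)` and `(U i; F i)` are the kernels of the knowledge states of the
intruder and of `uᵢ`; `σ` is the ground substitution of the run, `μ i`/`θ i` the
witness substitutions, `ω` their composition, and `m` the spare name. -/
structure RunSetting : Type where
  inv : Term → Term
  Vq : Set ℕ
  n : ℕ
  β : ℕ → Assertion
  α : ℕ → Assertion
  T : ℕ → Set Term
  E : ℕ → Set (Term × Term)
  U : ℕ → Set Term
  F : ℕ → Set (Term × Term)
  σ : Subst
  μ : ℕ → Subst
  θ : ℕ → Subst
  ω : Subst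
  m : ℕ
  -- well-formedness of the communicated assertions
  hβbv : ∀ i, 1 ≤ i → i ≤ n → (β i).bvSet ⊆ Vq
  hαbv : ∀ i, 1 ≤ i → i ≤ n → (α i).bvSet ⊆ Vq
  hβfv : ∀ i, 1 ≤ i → i ≤ n → (β i).fv ∩ Vq = ∅
  hαfv : ∀ i, 1 ≤ i → i ≤ n → (α i).fv ∩ Vq = ∅
  -- σ is ground, defined on the intruder variables of the run, and fixes Vq
  hσVq : ∀ x ∈ Vq, σ x = Term.var x
  hσground : ∀ x ∈ σ.dom, (σ x).ground
  -- evolution of the kernels of the intruder's knowledge state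
  hT0 : ∀ t ∈ T 0, t.ground
  hE0 : E 0 = ∅
  hTmono : ∀ i, T i ⊆ T (i + 1)
  hEmono : ∀ i, E i ⊆ E (i + 1)
  hTstep : ∀ i, 1 ≤ i → i ≤ n →
    T i = T (i - 1) ∪ pubs Vq (α i) ∪ varTerms (α i).bvSet
  hEstep : ∀ i, 1 ≤ i → i ≤ n → E i = E (i - 1) ∪ {((α i).l, (α i).r)}
  -- knowledge states are finite
  hTfin : ∀ i, i ≤ n → (T i).Finite
  hEfin : ∀ i, i ≤ n → (E i).Finite
  hUfin : ∀ i, i ≤ n → (U i).Finite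
  hFfin : ∀ i, i ≤ n → (F i).Finite
  -- provenance of honest agents' kernels
  hUmem : ∀ i, 1 ≤ i → i ≤ n → ∀ t ∈ U i,
    (∃ x ∈ Vq, t = Term.var x) ∨ t.tvars ⊆ σ.dom
  hFmem : ∀ i, 1 ≤ i → i ≤ n → ∀ e ∈ F i,
    ∃ j, 1 ≤ j ∧ j ≤ i ∧ e = ((β j).l, (β j).r)
  -- variables sent by honest agents were received earlier (Observation 2 of the paper)
  hfvEarlier : ∀ i, 1 ≤ i → i ≤ n → ∀ x ∈ (α i).fv,
    ∃ j, 1 ≤ j ∧ j ≤ i ∧ x ∈ (β j).fv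
  -- witness substitutions and the derivability conditions of the run
  hμdom : ∀ i, 1 ≤ i → i ≤ n → (μ i).dom ⊆ (β i).bvSet
  hθdom : ∀ i, 1 ≤ i → i ≤ n → (θ i).dom ⊆ (α i).bvSet
  hμdy : ∀ i, 1 ≤ i → i ≤ n → ∀ x ∈ (μ i).dom,
    dy inv (Subst.app σ '' T (i - 1)) (μ i x)
  hμeq : ∀ i, 1 ≤ i → i ≤ n →
    eqdrv inv (Subst.app σ '' T (i - 1)) (pairImg σ (E (i - 1)))
      (σ.app ((μ i).app (β i).l)) (σ.app ((μ i).app (β i).r))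
  hθdy : ∀ i, 1 ≤ i → i ≤ n → ∀ x ∈ (θ i).dom,
    dy inv (Subst.app σ '' U i) (θ i x)
  hθeq : ∀ i, 1 ≤ i → i ≤ n →
    eqdrv inv (Subst.app σ '' U i) (pairImg σ (F i))
      (σ.app ((θ i).app (α i).l)) (σ.app ((θ i).app (α i).r))
  -- ω is the composition σμ₁θ₁…μₙθₙ
  hωσ : ∀ x, ω.app (σ x) = ω x
  hωμ : ∀ i, 1 ≤ i → i ≤ n → ∀ x, ω.app ((μ i) x) = ω x
  hωθ : ∀ i, 1 ≤ i → i ≤ n → ∀ x, ω.app ((θ i) x) = ω x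
  hωground : ∀ x ∈ ω.dom, (ω x).ground
  hωT : ∀ i, i ≤ n → ∀ t ∈ T i ∪ U i, (ω.app t).ground
  hωE : ∀ i, i ≤ n → ∀ e ∈ E i ∪ F i, (ω.app e.1).ground ∧ (ω.app e.2).ground
  -- the spare name m
  hm : Term.name m ∈ T 0
  hmβ : ∀ i, 1 ≤ i → i ≤ n →
    Term.name m ∉ (β i).subterms ∪ (α i).subterms
  hmμ : ∀ i, 1 ≤ i → i ≤ n → ∀ x ∈ (μ i).dom, Term.name m ∉ (μ i x).subterms
  hmθ : ∀ i, 1 ≤ i → i ≤ n → ∀ x ∈ (θ i).dom, Term.name m ∉ (θ i x).subterms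

namespace RunSetting

variable (R : RunSetting)

/-- The public terms of the `i`-th intruder send. -/
def IT (i : ℕ) : Set Term := pubs R.Vq (R.β i)

/-- The public terms of the `i`-th honest agent send. -/
def HT (i : ℕ) : Set Term := pubs R.Vq (R.α i)

/-- The type set 𝒞 of the run. -/
def C : Set Term :=
  ⋃ i ∈ Set.Iic R.n, (sSubterms (R.T i ∪ R.U i) ∪ pairSubterms (R.E i ∪ R.F i))

/-- The type set 𝒟 = 𝒞 ∖ 𝒱 of the run. -/
def D : Set Term := R.C \ Set.range Term.var

/-- A variable is minimal if its ω-image coincides with the ω-image of no term of 𝒟. -/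
def minimal (x : ℕ) : Prop := x ∈ R.ω.dom ∧ ¬ ∃ t ∈ R.D, R.ω.app t = R.ω x

/-- A term is zappable if it ω-unifies with some minimal variable. -/
def zappable (t : Term) : Prop := ∃ x, R.minimal x ∧ R.ω.app t = R.ω x

/-- The zap of a term: zappable terms get replaced by the spare name `m`. -/
noncomputable def zap : Term → Term
  | Term.var x => Term.var x
  | Term.name k => if R.zappable (Term.name k) then Term.name R.m else Term.name k
  | Term.pair a b =>
      if R.zappable (Term.pair a b) then Term.name R.m
      else Term.pair (zap a) (zap b)
  | Term.enc a b =>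
      if R.zappable (Term.enc a b) then Term.name R.m
      else Term.enc (zap a) (zap b)

/-- The small substitution λ* corresponding to λ. -/
noncomputable def star (lam : Subst) : Subst := fun x => R.zap (lam x)

/-- The set of typed terms: σ(𝒟) ∪ ω(𝒞) ∪ 𝒱_q. -/
def typedSet : Set Term :=
  Subst.app R.σ '' R.D ∪ Subst.app R.ω '' R.C ∪ varTerms R.Vq

/-- A typed term. -/
def typedTerm (t : Term) : Prop := t ∈ R.typedSet

end RunSetting

/-!
A normal proof ending in a destructor only takes a hypothesis apart, so `t` is a subterm of
`σ u` for some `u ∈ Tᵢ`. As `t` is neither `σ` of a type nor a quantifiable variable, it lies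
inside `σ x` for an intruder variable `x` of `u`, and `x` was first received in some `βⱼ` with
`j ≤ i`. The intruder derived `σ μⱼ βⱼ` from `σ(Tⱼ₋₁; Eⱼ₋₁)`, and the sides of a ⊢eq-derived
equality are built by pairing and encryption from derivable terms and from sides of sent
equalities. A side of a sent equality without quantified variables is a public term, hence
already in the intruder's knowledge, because `ω` unifies both sides so neither is a proper
subterm of the other. Induction on the stage then yields derivability at some `ℓ < i`.
-/

namespace Term

@[simp]
lemma mem_subterms_self (t : Term) : t ∈ t.subterms := by
  cases t <;> simp [subterms]

lemma mem_subterms_trans {u s t : Term} (hs : s ∈ u.subterms) (ht : t ∈ s.subterms) :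
    t ∈ u.subterms := by
  induction u with
  | name | var => simp_all [subterms]
  | pair a b iha ihb | enc a b iha ihb =>
    simp only [subterms, Set.mem_insert_iff, Set.mem_union] at hs ⊢
    rcases hs with rfl | hs | hs
    · simpa only [subterms, Set.mem_insert_iff, Set.mem_union] using ht
    · exact Or.inr (Or.inl (iha hs))
    · exact Or.inr (Or.inr (ihb hs))

lemma mem_tvars_iff {x : ℕ} {u : Term} : x ∈ u.tvars ↔ var x ∈ u.subterms := by
  induction u with
  | name | var => simp [tvars, subterms]
  | pair a b iha ihb | enc a b iha ihb => simp [tvars, subterms, iha, ihb]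

lemma tvars_subset_of_mem_subterms {u s : Term} (hs : s ∈ u.subterms) : s.tvars ⊆ u.tvars :=
  fun _ hx => mem_tvars_iff.2 (mem_subterms_trans hs (mem_tvars_iff.1 hx))

lemma sizeOf_le_of_mem_subterms {u s : Term} (hs : s ∈ u.subterms) : sizeOf s ≤ sizeOf u := by
  induction u with
  | name | var => simp_all [subterms]
  | pair a b iha ihb | enc a b iha ihb =>
    simp only [subterms, Set.mem_insert_iff, Set.mem_union] at hs
    rcases hs with rfl | hs | hs
    · rfl
    · have := iha hs; simp only [pair.sizeOf_spec, enc.sizeOf_spec]; omega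
    · have := ihb hs; simp only [pair.sizeOf_spec, enc.sizeOf_spec]; omega

end Term

namespace Subst

lemma app_mem_subterms_app (σ : Subst) {u s : Term} (hs : s ∈ u.subterms) :
    σ.app s ∈ (σ.app u).subterms := by
  induction u with
  | name | var => simp_all [Term.subterms]
  | pair a b iha ihb | enc a b iha ihb =>
    simp only [Term.subterms, Set.mem_insert_iff, Set.mem_union] at hs
    rcases hs with rfl | hs | hs
    · exact Term.mem_subterms_self _
    · simp only [app, Term.subterms, Set.mem_insert_iff, Set.mem_union]
      exact Or.inr (Or.inl (iha hs))
    · simp only [app, Term.subterms, Set.mem_insert_iff, Set.mem_union]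
      exact Or.inr (Or.inr (ihb hs))

lemma sizeOf_app_lt_of_mem_subterms (σ : Subst) {u s : Term} (hs : s ∈ u.subterms)
    (hne : s ≠ u) : sizeOf (σ.app s) < sizeOf (σ.app u) := by
  cases u with
  | name | var => simp_all [Term.subterms]
  | pair a b | enc a b =>
    simp only [Term.subterms, Set.mem_insert_iff, Set.mem_union] at hs
    rcases hs with rfl | hs | hs
    · exact absurd rfl hne
    · have := Term.sizeOf_le_of_mem_subterms (σ.app_mem_subterms_app hs)
      simp only [app, Term.pair.sizeOf_spec, Term.enc.sizeOf_spec]; omega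
    · have := Term.sizeOf_le_of_mem_subterms (σ.app_mem_subterms_app hs)
      simp only [app, Term.pair.sizeOf_spec, Term.enc.sizeOf_spec]; omega

lemma mem_subterms_app (σ : Subst) {u t : Term} (ht : t ∈ (σ.app u).subterms) :
    (∃ s ∈ u.subterms, s ∉ Set.range Term.var ∧ t = σ.app s) ∨
      ∃ x ∈ u.tvars, t ∈ (σ x).subterms := by
  induction u with
  | name n =>
    simp only [app, Term.subterms, Set.mem_singleton_iff] at ht
    exact Or.inl ⟨_, Term.mem_subterms_self _, by simp, by simp [app, ht]⟩
  | var x => exact Or.inr ⟨x, by simp [Term.tvars], ht⟩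
  | pair a b iha ihb | enc a b iha ihb =>
    simp only [app, Term.subterms, Set.mem_insert_iff, Set.mem_union] at ht
    rcases ht with rfl | ht | ht
    · exact Or.inl ⟨_, Term.mem_subterms_self _, by simp, rfl⟩
    · rcases iha ht with ⟨s, hs, hnv, rfl⟩ | ⟨x, hx, hxt⟩
      · exact Or.inl ⟨s, by simp [Term.subterms, hs], hnv, rfl⟩
      · exact Or.inr ⟨x, by simp [Term.tvars, hx], hxt⟩
    · rcases ihb ht with ⟨s, hs, hnv, rfl⟩ | ⟨x, hx, hxt⟩
      · exact Or.inl ⟨s, by simp [Term.subterms, hs], hnv, rfl⟩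
      · exact Or.inr ⟨x, by simp [Term.tvars, hx], hxt⟩

lemma app_app_of_forall (ω f : Subst) (h : ∀ x, ω.app (f x) = ω x) (u : Term) :
    ω.app (f.app u) = ω.app u := by
  induction u with
  | name => rfl
  | var x => exact h x
  | pair a b iha ihb | enc a b iha ihb => simp only [app, iha, ihb]

end Subst

lemma Subst.tvars_inter_subset_tvars_app {σ : Subst} {V : Set ℕ} (hσ : ∀ x ∈ V, σ x = Term.var x)
    (u : Term) : u.tvars ∩ V ⊆ (σ.app u).tvars := by
  rintro x ⟨hx, hxV⟩
  have := σ.app_mem_subterms_app (Term.mem_tvars_iff.1 hx)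
  rwa [Subst.app, hσ x hxV, ← Term.mem_tvars_iff] at this

lemma notMem_varTerms_of_tvars_inter_eq_empty {V : Set ℕ} {t : Term}
    (h : t.tvars ∩ V = ∅) : t ∉ varTerms V := by
  rintro ⟨x, hx, rfl⟩
  exact h.subset ⟨rfl, hx⟩

lemma dy_mono {inv : Term → Term} {X Y : Set Term} (hXY : X ⊆ Y) {t : Term}
    (h : dy inv X t) : dy inv Y t := by
  induction h with
  | ax h => exact dy.ax (hXY h)
  | pair _ _ ih₁ ih₂ => exact dy.pair ih₁ ih₂
  | enc _ _ ih₁ ih₂ => exact dy.enc ih₁ ih₂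
  | fst _ ih => exact dy.fst ih
  | snd _ ih => exact dy.snd ih
  | dec _ _ ih₁ ih₂ => exact dy.dec ih₁ ih₂

lemma dy_or_mem_sSubterms_of_mem_subterms {inv : Term → Term} {X : Set Term} {a t : Term}
    (ha : dy inv X a) (ht : t ∈ a.subterms) : dy inv X t ∨ t ∈ sSubterms X := by
  induction ha with
  | @ax a ha => exact Or.inr (Set.mem_biUnion ha ht)
  | pair h₁ h₂ ih₁ ih₂ | enc h₁ h₂ ih₁ ih₂ =>
    simp only [Term.subterms, Set.mem_insert_iff, Set.mem_union] at ht
    rcases ht with rfl | ht | ht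
    · first | exact Or.inl (dy.pair h₁ h₂) | exact Or.inl (dy.enc h₁ h₂)
    · exact ih₁ ht
    · exact ih₂ ht
  | fst _ ih | dec _ _ ih _ => exact ih (by simp [Term.subterms, ht])
  | snd _ ih => exact ih (by simp [Term.subterms, ht])

/-- Normality forbids a constructor right above a destructor, so below the last constructor the
proof only takes a hypothesis apart. -/
lemma DPT.concl_mem_sSubterms {inv : Term → Term} {X : Set Term} {d : DPT} {t : Term}
    (hv : d.valid inv X) (hn : d.normal) (hnc : ¬ d.endsConstructor)
    (hc : d.concl inv = some t) : t ∈ sSubterms X := by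
  induction d generalizing t with
  | ax s =>
    cases Option.some.inj hc
    exact Set.mem_biUnion hv (Term.mem_subterms_self _)
  | pair | enc => exact absurd trivial hnc
  | fst p ih | snd p ih =>
    obtain ⟨hvp, a, b, hab⟩ := hv
    simp only [concl, hab, Option.some.injEq] at hc
    subst hc
    obtain ⟨u, hu, hsub⟩ := Set.mem_iUnion₂.1 (ih hvp hn.1 hn.2 hab)
    exact Set.mem_biUnion hu (Term.mem_subterms_trans hsub (by simp [Term.subterms]))
  | dec p q ih _ =>
    obtain ⟨hvp, -, a, k, hak, hk⟩ := hv
    simp only [concl, hak, hk, if_true, Option.some.injEq] at hc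
    subst hc
    obtain ⟨u, hu, hsub⟩ := Set.mem_iUnion₂.1 (ih hvp hn.1 hn.2.2 hak)
    exact Set.mem_biUnion hu (Term.mem_subterms_trans hsub (by simp [Term.subterms]))

/-- The terms that can occur on either side of an equality derivable from `(X; E)`:
closure of the DY-derivable terms and the sides of `E` under pairing and encryption. -/
inductive SideClosure (inv : Term → Term) (X : Set Term) (E : Set (Term × Term)) : Term → Prop
  | dy {a} : dy inv X a → SideClosure inv X E a
  | left {a b} : (a, b) ∈ E → SideClosure inv X E a
  | right {a b} : (a, b) ∈ E → SideClosure inv X E b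
  | pair {a b} : SideClosure inv X E a → SideClosure inv X E b →
      SideClosure inv X E (Term.pair a b)
  | enc {a b} : SideClosure inv X E a → SideClosure inv X E b →
      SideClosure inv X E (Term.enc a b)

namespace eqdrv

variable {inv : Term → Term} {X : Set Term} {E : Set (Term × Term)} {a b : Term}

lemma sideClosure (h : eqdrv inv X E a b) : SideClosure inv X E a ∧ SideClosure inv X E b := by
  induction h with
  | ax h => exact ⟨.left h, .right h⟩
  | eq h => exact ⟨.dy h, .dy h⟩
  | sym _ ih => exact ih.symm
  | trans _ _ ih₁ ih₂ => exact ⟨ih₁.1, ih₂.2⟩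
  | consPair _ _ ih₁ ih₂ => exact ⟨.pair ih₁.1 ih₂.1, .pair ih₁.2 ih₂.2⟩
  | consEnc _ _ ih₁ ih₂ => exact ⟨.enc ih₁.1 ih₂.1, .enc ih₁.2 ih₂.2⟩
  | projPairFst _ h₀ _ h₂ _ | projEncFst _ h₀ _ h₂ _ => exact ⟨.dy h₀, .dy h₂⟩
  | projPairSnd _ _ h₁ _ h₃ | projEncSnd _ _ h₁ _ h₃ => exact ⟨.dy h₁, .dy h₃⟩

lemma app_eq (ν : Subst) (hE : ∀ e ∈ E, ν.app e.1 = ν.app e.2) (h : eqdrv inv X E a b) :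
    ν.app a = ν.app b := by
  induction h with
  | ax h => exact hE _ h
  | eq _ => rfl
  | sym _ ih => exact ih.symm
  | trans _ _ ih₁ ih₂ => exact ih₁.trans ih₂
  | consPair _ _ ih₁ ih₂ | consEnc _ _ ih₁ ih₂ => simp only [Subst.app, ih₁, ih₂]
  | projPairFst _ _ _ _ _ ih | projPairSnd _ _ _ _ _ ih =>
    simp only [Subst.app, Term.pair.injEq] at ih; first | exact ih.1 | exact ih.2
  | projEncFst _ _ _ _ _ ih | projEncSnd _ _ _ _ _ ih =>
    simp only [Subst.app, Term.enc.injEq] at ih; first | exact ih.1 | exact ih.2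

end eqdrv

/-- If some substitution unifies the two sides of `α`, neither side can be a proper subterm of
the other, so a side without quantified variables is a maximal such subterm. -/
lemma side_mem_pubs {Vq : Set ℕ} {α : Assertion} (ω : Subst) (hω : ω.app α.l = ω.app α.r)
    {s : Term} (hs : s = α.l ∨ s = α.r) (hVq : s.tvars ∩ Vq = ∅) : s ∈ pubs Vq α := by
  have hωs : ω.app s = ω.app α.l := by rcases hs with rfl | rfl <;> simp [hω]
  refine ⟨by rcases hs with rfl | rfl <;> simp [Assertion.subterms], hVq, ?_⟩
  rintro ⟨w, hw, hne, hsw, -⟩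
  have hwl : ω.app w ∈ (ω.app α.l).subterms := by
    rcases hw with hw | hw
    · exact ω.app_mem_subterms_app hw
    · rw [hω]; exact ω.app_mem_subterms_app hw
  have hlt := ω.sizeOf_app_lt_of_mem_subterms hsw hne
  have hle := Term.sizeOf_le_of_mem_subterms hwl
  rw [← hωs] at hle
  omega

namespace RunSetting

variable (R : RunSetting)

lemma T_mono {l l' : ℕ} (h : l ≤ l') : R.T l ⊆ R.T l' :=
  monotone_nat_of_le_succ R.hTmono h

lemma exists_eq_α_of_mem_E {k : ℕ} (hk : k ≤ R.n) {e : Term × Term} (he : e ∈ R.E k) :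
    ∃ p, 1 ≤ p ∧ p ≤ k ∧ e = ((R.α p).l, (R.α p).r) := by
  induction k with
  | zero => simp [R.hE0] at he
  | succ k ih =>
    rw [R.hEstep (k + 1) (by omega) hk, Nat.add_sub_cancel] at he
    rcases he with he | rfl
    · obtain ⟨p, hp1, hpk, rfl⟩ := ih (by omega) he
      exact ⟨p, hp1, by omega, rfl⟩
    · exact ⟨k + 1, by omega, le_rfl, rfl⟩

lemma exists_mem_fv_α_of_mem_T {k : ℕ} (hk : k ≤ R.n) {u : Term} (hu : u ∈ R.T k) {x : ℕ}
    (hx : x ∈ u.tvars) (hxV : x ∉ R.Vq) : ∃ j, 1 ≤ j ∧ j ≤ k ∧ x ∈ (R.α j).fv := by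
  induction k with
  | zero =>
    have hground : u.tvars = ∅ := R.hT0 u hu
    simp [hground] at hx
  | succ k ih =>
    rw [R.hTstep (k + 1) (by omega) hk, Nat.add_sub_cancel] at hu
    rcases hu with (hu | ⟨hu, -⟩) | ⟨z, hz, rfl⟩
    · obtain ⟨j, hj1, hjk, hj⟩ := ih (by omega) hu
      exact ⟨j, hj1, by omega, hj⟩
    · refine ⟨k + 1, by omega, le_rfl, ?_, fun hbv => hxV (R.hαbv (k + 1) (by omega) hk hbv)⟩
      rcases hu with hu | hu
      · exact Or.inl (Term.tvars_subset_of_mem_subterms hu hx)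
      · exact Or.inr (Term.tvars_subset_of_mem_subterms hu hx)
    · simp only [Term.tvars, Set.mem_singleton_iff] at hx
      subst hx
      exact absurd (R.hαbv (k + 1) (by omega) hk hz) hxV

def kernelTerms (k : ℕ) : Set Term := R.T k ∪ {u | ∃ e ∈ R.E k, u = e.1 ∨ u = e.2}

lemma subterms_subset_C {k : ℕ} (hk : k ≤ R.n) {u : Term} (hu : u ∈ R.kernelTerms k) :
    u.subterms ⊆ R.C := by
  intro s hs
  refine Set.mem_biUnion (Set.mem_Iic.2 hk) ?_
  rcases hu with hu | ⟨e, he, rfl | rfl⟩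
  · exact Or.inl (Set.mem_biUnion (Or.inl hu) hs)
  · exact Or.inr (Set.mem_biUnion (Or.inl he) (Or.inl hs))
  · exact Or.inr (Set.mem_biUnion (Or.inl he) (Or.inr hs))

lemma exists_mem_fv_α_of_mem_kernelTerms {k : ℕ} (hk : k ≤ R.n) {u : Term}
    (hu : u ∈ R.kernelTerms k) {x : ℕ} (hx : x ∈ u.tvars) (hxV : x ∉ R.Vq) :
    ∃ j, 1 ≤ j ∧ j ≤ k ∧ x ∈ (R.α j).fv := by
  rcases hu with hu | ⟨e, he, hue⟩
  · exact R.exists_mem_fv_α_of_mem_T hk hu hx hxV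
  · obtain ⟨p, hp1, hpk, rfl⟩ := R.exists_eq_α_of_mem_E hk he
    refine ⟨p, hp1, hpk, ?_, fun hbv => hxV (R.hαbv p hp1 (hpk.trans hk) hbv)⟩
    rcases hue with rfl | rfl
    · exact Or.inl hx
    · exact Or.inr hx

lemma ω_app_eq_of_eqdrv {X : Set Term} {E : Set (Term × Term)} {l r : Term} (f : Subst)
    (hf : ∀ x, R.ω.app (f x) = R.ω x) (hE : ∀ e ∈ E, R.ω.app e.1 = R.ω.app e.2)
    (h : eqdrv R.inv X (pairImg R.σ E) (R.σ.app (f.app l)) (R.σ.app (f.app r))) :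
    R.ω.app l = R.ω.app r := by
  have hωσ := Subst.app_app_of_forall R.ω R.σ R.hωσ
  have hσE : ∀ e ∈ pairImg R.σ E, R.ω.app e.1 = R.ω.app e.2 := by
    rintro _ ⟨e, he, rfl⟩
    simpa only [hωσ] using hE e he
  simpa only [hωσ, Subst.app_app_of_forall R.ω f hf] using h.app_eq R.ω hσE

/-- Induction along the run: each received equality is ⊢eq-derived from the earlier sent ones,
and each sent one from the received ones, and `ω` instantiates all witnesses. -/
lemma ω_unifies_α {p : ℕ} (hp1 : 1 ≤ p) (hpn : p ≤ R.n) :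
    R.ω.app (R.α p).l = R.ω.app (R.α p).r := by
  induction p using Nat.strong_induction_on with
  | _ p ih =>
    have hβ : ∀ q, 1 ≤ q → q ≤ p → R.ω.app (R.β q).l = R.ω.app (R.β q).r := by
      intro q hq1 hqp
      refine R.ω_app_eq_of_eqdrv (R.μ q) (R.hωμ q hq1 (hqp.trans hpn)) ?_
        (R.hμeq q hq1 (hqp.trans hpn))
      intro e he
      obtain ⟨p', hp'1, hp'q, rfl⟩ := R.exists_eq_α_of_mem_E (by omega) he
      exact ih p' (by omega) hp'1 (by omega)
    refine R.ω_app_eq_of_eqdrv (R.θ p) (R.hωθ p hp1 hpn) ?_ (R.hθeq p hp1 hpn)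
    intro e he
    obtain ⟨q, hq1, hqp, rfl⟩ := R.hFmem p hp1 hpn e he
    exact hβ q hq1 hqp

lemma side_α_mem_T {p : ℕ} (hp1 : 1 ≤ p) (hpn : p ≤ R.n) {s : Term}
    (hs : s = (R.α p).l ∨ s = (R.α p).r) (hVq : (R.σ.app s).tvars ∩ R.Vq = ∅) :
    s ∈ R.T p := by
  have hsVq : s.tvars ∩ R.Vq = ∅ := by
    refine Set.eq_empty_of_subset_empty fun x hx => hVq.subset ⟨?_, hx.2⟩
    exact Subst.tvars_inter_subset_tvars_app R.hσVq s hx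
  rw [R.hTstep p hp1 hpn]
  exact Or.inl (Or.inr (side_mem_pubs R.ω (R.ω_unifies_α hp1 hpn) hs hsVq))

abbrev sideClosureAt (k : ℕ) : Term → Prop :=
  SideClosure R.inv (Subst.app R.σ '' R.T k) (pairImg R.σ (R.E k))

lemma exists_dy_of_sideClosureAt {k : ℕ} (hk : k ≤ R.n) {a : Term} (ha : R.sideClosureAt k a)
    (hVq : a.tvars ∩ R.Vq = ∅) : ∃ l ≤ k, dy R.inv (Subst.app R.σ '' R.T l) a := by
  induction ha with
  | dy h => exact ⟨k, le_rfl, h⟩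
  | @left a b hab | @right a b hab =>
    obtain ⟨e, he, he'⟩ := hab
    obtain ⟨p, hp1, hpk, rfl⟩ := R.exists_eq_α_of_mem_E hk he
    simp only [Prod.mk.injEq] at he'
    obtain ⟨rfl, rfl⟩ := he'
    first
      | exact ⟨p, hpk, dy.ax ⟨_, R.side_α_mem_T hp1 (hpk.trans hk) (Or.inl rfl) hVq, rfl⟩⟩
      | exact ⟨p, hpk, dy.ax ⟨_, R.side_α_mem_T hp1 (hpk.trans hk) (Or.inr rfl) hVq, rfl⟩⟩
  | pair _ _ ih₁ ih₂ | enc _ _ ih₁ ih₂ =>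
    simp only [Term.tvars, Set.union_inter_distrib_right, Set.union_empty_iff] at hVq
    obtain ⟨l₁, hl₁, h₁⟩ := ih₁ hVq.1
    obtain ⟨l₂, hl₂, h₂⟩ := ih₂ hVq.2
    have h₁' := dy_mono (Set.image_mono (R.T_mono (le_max_left l₁ l₂))) h₁
    have h₂' := dy_mono (Set.image_mono (R.T_mono (le_max_right l₁ l₂))) h₂
    first
      | exact ⟨max l₁ l₂, max_le hl₁ hl₂, dy.pair h₁' h₂'⟩
      | exact ⟨max l₁ l₂, max_le hl₁ hl₂, dy.enc h₁' h₂'⟩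


/-- A free variable of a received assertion is not instantiated by the witness substitution,
so its `σ`-image sits inside a side of a ⊢eq-derived equality. -/
lemma exists_sideClosureAt_of_mem_fv_β {j : ℕ} (hj1 : 1 ≤ j) (hjn : j ≤ R.n) {x : ℕ}
    (hx : x ∈ (R.β j).fv) : ∃ a, R.sideClosureAt (j - 1) a ∧ R.σ x ∈ a.subterms := by
  have hμx : R.μ j x = Term.var x := by
    by_contra h
    exact hx.2 (R.hμdom j hj1 hjn h)
  have hmem : ∀ w : Term, x ∈ w.tvars → R.σ x ∈ (R.σ.app ((R.μ j).app w)).subterms := by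
    intro w hw
    have := R.σ.app_mem_subterms_app ((R.μ j).app_mem_subterms_app (Term.mem_tvars_iff.1 hw))
    rwa [Subst.app, hμx] at this
  have hQ := (R.hμeq j hj1 hjn).sideClosure
  rcases hx.1 with hx | hx
  · exact ⟨_, hQ.1, hmem _ hx⟩
  · exact ⟨_, hQ.2, hmem _ hx⟩

lemma tvars_inter_Vq_eq_empty_of_mem_subterms_σ {x : ℕ} (hxV : x ∉ R.Vq) {t : Term}
    (ht : t ∈ (R.σ x).subterms) : t.tvars ∩ R.Vq = ∅ := by
  by_cases hx : x ∈ R.σ.dom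
  · have hground : (R.σ x).tvars = ∅ := R.hσground x hx
    have hsub := Term.tvars_subset_of_mem_subterms ht
    rw [hground, Set.subset_empty_iff] at hsub
    rw [hsub, Set.empty_inter]
  · rw [show R.σ x = Term.var x from not_not.1 hx] at ht
    simp only [Term.subterms, Set.mem_singleton_iff] at ht
    subst ht
    simpa [Term.tvars] using hxV

lemma exists_earlier_sideClosureAt {k : ℕ} (hk : k ≤ R.n) {u : Term}
    (hu : u ∈ R.kernelTerms k) {t : Term} (ht : t ∈ (R.σ.app u).subterms)
    (hD : t ∉ Subst.app R.σ '' R.D) (hV : t ∉ varTerms R.Vq) :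
    ∃ j, 1 ≤ j ∧ j ≤ k ∧ ∃ a, R.sideClosureAt (j - 1) a ∧ t ∈ a.subterms ∧
      t.tvars ∩ R.Vq = ∅ := by
  rcases R.σ.mem_subterms_app ht with ⟨s, hs, hsvar, rfl⟩ | ⟨x, hx, htx⟩
  · exact absurd ⟨s, ⟨R.subterms_subset_C hk hu hs, hsvar⟩, rfl⟩ hD
  · have hxV : x ∉ R.Vq := by
      intro hxV
      rw [R.hσVq x hxV] at htx
      simp only [Term.subterms, Set.mem_singleton_iff] at htx
      exact hV ⟨x, hxV, htx.symm⟩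
    obtain ⟨j, hj1, hjk, hxα⟩ := R.exists_mem_fv_α_of_mem_kernelTerms hk hu hx hxV
    obtain ⟨j', hj'1, hj'j, hxβ⟩ := R.hfvEarlier j hj1 (hjk.trans hk) x hxα
    obtain ⟨a, ha, hxa⟩ := R.exists_sideClosureAt_of_mem_fv_β hj'1 (by omega) hxβ
    exact ⟨j', hj'1, by omega, a, ha, Term.mem_subterms_trans hxa htx,
      R.tvars_inter_Vq_eq_empty_of_mem_subterms_σ hxV htx⟩

lemma exists_dy_of_mem_subterms_sideClosureAt {k : ℕ} (hk : k ≤ R.n)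
    (hearlier : ∀ u ∈ R.kernelTerms k, ∀ t ∈ (R.σ.app u).subterms,
      t ∉ Subst.app R.σ '' R.D → t ∉ varTerms R.Vq →
        ∃ l < k, dy R.inv (Subst.app R.σ '' R.T l) t)
    {a : Term} (ha : R.sideClosureAt k a) {t : Term} (ht : t ∈ a.subterms)
    (hD : t ∉ Subst.app R.σ '' R.D) (hVq : t.tvars ∩ R.Vq = ∅) :
    ∃ l ≤ k, dy R.inv (Subst.app R.σ '' R.T l) t := by
  have hV := notMem_varTerms_of_tvars_inter_eq_empty hVq
  have of_kernel : ∀ u ∈ R.kernelTerms k, t ∈ (R.σ.app u).subterms →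
      ∃ l ≤ k, dy R.inv (Subst.app R.σ '' R.T l) t := fun u hu htu => by
    obtain ⟨l, hl, h⟩ := hearlier u hu t htu hD hV
    exact ⟨l, hl.le, h⟩
  induction ha with
  | dy h =>
    rcases dy_or_mem_sSubterms_of_mem_subterms h ht with h | h
    · exact ⟨k, le_rfl, h⟩
    · obtain ⟨_, ⟨u, hu, rfl⟩, htu⟩ := Set.mem_iUnion₂.1 h
      exact of_kernel u (Or.inl hu) htu
  | left hab | right hab =>
    obtain ⟨e, he, he'⟩ := hab
    simp only [Prod.mk.injEq] at he'
    obtain ⟨rfl, rfl⟩ := he'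
    first
      | exact of_kernel e.1 (Or.inr ⟨e, he, Or.inl rfl⟩) ht
      | exact of_kernel e.2 (Or.inr ⟨e, he, Or.inr rfl⟩) ht
  | pair h₁ h₂ ih₁ ih₂ | enc h₁ h₂ ih₁ ih₂ =>
    simp only [Term.subterms, Set.mem_insert_iff, Set.mem_union] at ht
    rcases ht with rfl | ht | ht
    · first
        | exact R.exists_dy_of_sideClosureAt hk (.pair h₁ h₂) hVq
        | exact R.exists_dy_of_sideClosureAt hk (.enc h₁ h₂) hVq
    · exact ih₁ ht
    · exact ih₂ ht

lemma exists_earlier_dy {k : ℕ} (hk : k ≤ R.n) {u : Term} (hu : u ∈ R.kernelTerms k) {t : Term}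
    (ht : t ∈ (R.σ.app u).subterms) (hD : t ∉ Subst.app R.σ '' R.D) (hV : t ∉ varTerms R.Vq) :
    ∃ l < k, dy R.inv (Subst.app R.σ '' R.T l) t := by
  induction k using Nat.strong_induction_on generalizing u t with
  | _ k ih =>
    obtain ⟨j, hj1, hjk, a, ha, hta, hVq⟩ := R.exists_earlier_sideClosureAt hk hu ht hD hV
    obtain ⟨l, hl, h⟩ := R.exists_dy_of_mem_subterms_sideClosureAt (by omega)
      (fun u hu t ht hD hV => ih (j - 1) (by omega) (by omega) hu ht hD hV) ha hta hD hVq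
    exact ⟨l, by omega, h⟩

end RunSetting

/-- Lemma (earlier-proof). -/
theorem stmt12 (R : RunSetting) (i : ℕ) (hi : i ≤ R.n) (t : Term)
    (ht : t ∉ Subst.app R.σ '' R.D ∪ varTerms R.Vq)
    (d : DPT) (hv : DPT.valid R.inv (Subst.app R.σ '' R.T i) d)
    (hc : DPT.concl R.inv d = some t) (hn : DPT.normal d)
    (hd : DPT.endsDestructor d) :
    ∃ l, l < i ∧ dy R.inv (Subst.app R.σ '' R.T l) t := by
  have hnc : ¬ d.endsConstructor := by
    cases d <;> simp_all [DPT.endsConstructor, DPT.endsDestructor]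
  obtain ⟨_, ⟨u, hu, rfl⟩, htu⟩ := Set.mem_iUnion₂.1 (DPT.concl_mem_sSubterms hv hn hnc hc)
  rw [Set.mem_union, not_or] at ht
  exact R.exists_earlier_dy hi (Or.inl hu) htu ht.1 ht.2
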